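/- arXiv:2212.02154 — 6 statements merged into one kernel-verified Lean document; each statement's English description precedes it below -/
import Mathlib

section
/- Let ι be a nonempty finite type and let Q be a fixed real ι×ι matrix. Let (P_N)_{N≥1} be a sequence of real ι×ι matrices with ‖P_N‖ ≤ 1 for all N (in a fixed submultiplicative matrix norm with ‖I‖ = 1, e.g. the ℓ∞→ℓ∞ operator norm), and let (c_N)_{N≥1} be a sequence of strictly positive reals with c_N → 0 as N → ∞. Assume that ‖P_N − (I + c_N Q)‖ = o(c_N) as N → ∞. Then for every t ≥ 0, the matrix powers P_N^{⌊t/c_N⌋} converge to the matrix exponential exp(tQ) as N → ∞. -/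
open Filter Matrix

attribute [local instance] Matrix.linftyOpNormedAddCommGroup Matrix.linftyOpNormedRing
  Matrix.linftyOpNormedAlgebra

/-!
Put `b = exp (c • Q)`. The hypothesis together with the first-order expansion of `exp` at `0`
gives `‖P - b‖ = o(c)`. Since `‖P‖ ≤ 1`, telescoping `P ^ k - b ^ k` bounds it by
`k * C * ‖P - b‖`, where `C` bounds `‖b ^ j‖ = ‖exp ((j * c) • Q)‖` for `j < k`; with
`k = ⌊t / c⌋₊` all these `j * c` lie in `[0, t]`, so a single compactness bound `C` works and
the error is at most `t * C * ‖P - b‖ / c → 0`. Finally `b ^ k = exp ((k * c) • Q) → exp (t • Q)`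
because `k * c → t`.
-/

section

open Topology NormedSpace Set

theorem norm_pow_sub_pow_le_of_norm_le_one {R : Type*} [SeminormedRing R] {a b : R} {C : ℝ}
    (ha : ‖a‖ ≤ 1) : ∀ k : ℕ, (∀ j < k, ‖b ^ j‖ ≤ C) → ‖a ^ k - b ^ k‖ ≤ k * C * ‖a - b‖
  | 0, _ => by simp
  | k + 1, hb => by
    have ih := norm_pow_sub_pow_le_of_norm_le_one ha k fun j hj => hb j (by omega)
    have hbk := hb k k.lt_succ_self
    calc ‖a ^ (k + 1) - b ^ (k + 1)‖ = ‖a * (a ^ k - b ^ k) + (a - b) * b ^ k‖ := by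
          rw [pow_succ', pow_succ']; noncomm_ring
      _ ≤ ‖a‖ * ‖a ^ k - b ^ k‖ + ‖a - b‖ * ‖b ^ k‖ :=
          (norm_add_le _ _).trans (add_le_add (norm_mul_le _ _) (norm_mul_le _ _))
      _ ≤ 1 * (k * C * ‖a - b‖) + ‖a - b‖ * C := by gcongr
      _ = (k + 1 : ℕ) * C * ‖a - b‖ := by push_cast; ring

theorem tendsto_nat_floor_div_mul {α : Type*} {l : Filter α} {c : α → ℝ}
    (hc : Tendsto c l (𝓝[>] 0)) {t : ℝ} (ht : 0 ≤ t) :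
    Tendsto (fun i => (⌊t / c i⌋₊ : ℝ) * c i) l (𝓝 t) := by
  have := (tendsto_nat_floor_mul_div_atTop ht).comp (tendsto_inv_nhdsGT_zero.comp hc)
  simpa [Function.comp_def, div_eq_mul_inv] using this

variable {𝔸 : Type*} [NormedRing 𝔸] [NormedAlgebra ℝ 𝔸] [CompleteSpace 𝔸]

theorem tendsto_norm_exp_smul_sub_one_sub_div {α : Type*} {l : Filter α} {c : α → ℝ}
    (hc : Tendsto c l (𝓝 0)) (x : 𝔸) :
    Tendsto (fun i => ‖exp (c i • x) - (1 + c i • x)‖ / c i) l (𝓝 0) := by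
  have h := hasDerivAt_iff_isLittleO_nhds_zero.mp (hasDerivAt_exp_smul_const (𝕂 := ℝ) x 0)
  simp only [zero_add, zero_smul, exp_zero, one_mul] at h
  have := (h.comp_tendsto hc).norm_left.tendsto_div_nhds_zero
  simpa [Function.comp_def, sub_sub] using this

theorem norm_pow_floor_div_sub_exp_smul_pow_le [NormedAlgebra ℚ 𝔸] {a x : 𝔸} {c t C : ℝ}
    (hc : 0 < c) (ht : 0 ≤ t) (ha : ‖a‖ ≤ 1) (hC : ∀ s ∈ Icc 0 t, ‖exp (s • x)‖ ≤ C) :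
    ‖a ^ ⌊t / c⌋₊ - exp (c • x) ^ ⌊t / c⌋₊‖ ≤ t * C * (‖a - exp (c • x)‖ / c) := by
  have hk : (⌊t / c⌋₊ : ℝ) ≤ t / c := Nat.floor_le (div_nonneg ht hc.le)
  have hC0 : 0 ≤ C := (norm_nonneg _).trans (hC 0 ⟨le_rfl, ht⟩)
  have hpow : ∀ j < ⌊t / c⌋₊, ‖exp (c • x) ^ j‖ ≤ C := by
    intro j hj
    rw [← NormedSpace.exp_nsmul, ← Nat.cast_smul_eq_nsmul ℝ, smul_smul]
    refine hC _ ⟨by positivity, ?_⟩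
    calc (j : ℝ) * c ≤ t / c * c := by gcongr; exact (Nat.cast_lt.mpr hj).le.trans hk
      _ = t := div_mul_cancel₀ t hc.ne'
  calc _ ≤ ⌊t / c⌋₊ * C * ‖a - exp (c • x)‖ := norm_pow_sub_pow_le_of_norm_le_one ha _ hpow
    _ ≤ t / c * C * ‖a - exp (c • x)‖ := by gcongr
    _ = t * C * (‖a - exp (c • x)‖ / c) := by ring

theorem tendsto_pow_nat_floor_div_exp_smul [NormedAlgebra ℚ 𝔸] {α : Type*} {l : Filter α}
    (x : 𝔸) (a : α → 𝔸) (c : α → ℝ)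
    (hc_pos : ∀ i, 0 < c i) (hc0 : Tendsto c l (𝓝 0)) (ha : ∀ i, ‖a i‖ ≤ 1)
    (hTaylor : Tendsto (fun i => ‖a i - (1 + c i • x)‖ / c i) l (𝓝 0)) {t : ℝ} (ht : 0 ≤ t) :
    Tendsto (fun i => a i ^ ⌊t / c i⌋₊) l (𝓝 (exp (t • x))) := by
  obtain ⟨C, hC⟩ := isCompact_Icc.exists_bound_of_continuousOn
    (f := fun s : ℝ => exp (s • x)) (by fun_prop)
  have hc : Tendsto c l (𝓝[>] 0) := tendsto_nhdsWithin_iff.mpr ⟨hc0, .of_forall hc_pos⟩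
  have hdist : Tendsto (fun i => ‖a i - exp (c i • x)‖ / c i) l (𝓝 0) := by
    refine squeeze_zero (fun i => div_nonneg (norm_nonneg _) (hc_pos i).le) (fun i => ?_)
      (by simpa using hTaylor.add (tendsto_norm_exp_smul_sub_one_sub_div hc0 x))
    rw [← add_div]
    refine div_le_div_of_nonneg_right ?_ (hc_pos i).le
    calc ‖a i - exp (c i • x)‖ ≤ ‖a i - (1 + c i • x)‖ + ‖(1 + c i • x) - exp (c i • x)‖ :=
          norm_sub_le_norm_sub_add_norm_sub _ _ _
      _ = _ := by rw [norm_sub_rev (1 + _)]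
  have hpow : Tendsto (fun i => a i ^ ⌊t / c i⌋₊ - exp (c i • x) ^ ⌊t / c i⌋₊) l (𝓝 0) := by
    refine squeeze_zero_norm
      (fun i => norm_pow_floor_div_sub_exp_smul_pow_le (hc_pos i) ht (ha i) hC) ?_
    simpa using hdist.const_mul (t * C)
  have hexp : Tendsto (fun i => exp (c i • x) ^ ⌊t / c i⌋₊) l (𝓝 (exp (t • x))) := by
    simp_rw [← NormedSpace.exp_nsmul, ← Nat.cast_smul_eq_nsmul ℝ, smul_smul]
    exact (exp_continuous.tendsto _).comp ((tendsto_nat_floor_div_mul hc ht).smul_const x)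
  simpa using hpow.add hexp

end

theorem stmt0_general {ι : Type*} [Fintype ι] [DecidableEq ι]
    (Q : Matrix ι ι ℝ) (P : ℕ → Matrix ι ι ℝ) (c : ℕ → ℝ)
    (hc_pos : ∀ N, 0 < c N)
    (hc0 : Tendsto c atTop (nhds 0))
    (hPnorm : ∀ N, ‖P N‖ ≤ 1)
    (hTaylor : Tendsto (fun N => ‖P N - (1 + c N • Q)‖ / c N) atTop (nhds 0))
    (t : ℝ) (ht : 0 ≤ t) :
    Tendsto (fun N => P N ^ (⌊t / c N⌋₊)) atTop (nhds (NormedSpace.exp (t • Q))) :=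
  have : CompleteSpace (Matrix ι ι ℝ) := FiniteDimensional.complete ℝ _
  tendsto_pow_nat_floor_div_exp_smul Q P c hc_pos hc0 hPnorm hTaylor ht

/-- If `P N` are matrices with `‖P N‖ ≤ 1`, `c N > 0`, `c N → 0`, and
`‖P N - (I + c N • Q)‖ = o(c N)`, then `P N ^ ⌊t / c N⌋ → exp (t • Q)` for every `t ≥ 0`.
The norm is the ℓ∞→ℓ∞ operator norm on matrices. -/
theorem stmt0 {ι : Type*} [Fintype ι] [Nonempty ι] [DecidableEq ι]
    (Q : Matrix ι ι ℝ) (P : ℕ → Matrix ι ι ℝ) (c : ℕ → ℝ)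
    (hc_pos : ∀ N, 0 < c N)
    (hc0 : Tendsto c atTop (nhds 0))
    (hPnorm : ∀ N, ‖P N‖ ≤ 1)
    (hTaylor : Tendsto (fun N => ‖P N - (1 + c N • Q)‖ / c N) atTop (nhds 0))
    (t : ℝ) (ht : 0 ≤ t) :
    Tendsto (fun N => P N ^ (⌊t / c N⌋₊)) atTop (nhds (NormedSpace.exp (t • Q))) :=
  stmt0_general Q P c hc_pos hc0 hPnorm hTaylor t ht
end

section
/- Fix an integer n ≥ 2. There exist a constant C(n) > 0 and an integer N₀ such that the following holds for all N ≥ N₀. Let (ν_1, …, ν_N) be any random vector of nonnegative integers such that Σ_N := ν_1 + ⋯ + ν_N ≥ N almost surely. Then for every tuple of positive integers (b_1, …, b_j) with b_1 + ⋯ + b_j = n, one has | E[ Σ_{i_1,…,i_j distinct in {1,…,N}} (ν_{i_1})_{b_1} ⋯ (ν_{i_j})_{b_j} / (Σ_N)_n ] − E[ Σ_{i_1,…,i_j distinct in {1,…,N}} (ν_{i_1}/Σ_N)^{b_1} ⋯ (ν_{i_j}/Σ_N)^{b_j} ] | ≤ C(n) · E[1/Σ_N]. -/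
open MeasureTheory Finset

/-- The falling factorial `(a)_b = a (a-1) ⋯ (a-b+1)` of a real number. -/
noncomputable def fallFact (a : ℝ) (b : ℕ) : ℝ := ∏ r ∈ Finset.range b, (a - r)

lemma fall_eq_zero {x b : ℕ} (h : x < b) : fallFact (x : ℝ) b = 0 := by
  apply Finset.prod_eq_zero (Finset.mem_range.2 h)
  simp

lemma fall_nonneg (x b : ℕ) : 0 ≤ fallFact (x : ℝ) b := by
  rcases lt_or_ge x b with h | h
  · rw [fall_eq_zero h]
  · apply Finset.prod_nonneg
    intro r hr
    have := Finset.mem_range.1 hr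
    have : (r : ℝ) ≤ (x : ℝ) := by exact_mod_cast le_of_lt (lt_of_lt_of_le this h)
    linarith

lemma fall_le_pow (x b : ℕ) : fallFact (x : ℝ) b ≤ (x : ℝ) ^ b := by
  rcases lt_or_ge x b with h | h
  · rw [fall_eq_zero h]; positivity
  · calc fallFact (x:ℝ) b ≤ ∏ _r ∈ Finset.range b, (x:ℝ) := by
          apply Finset.prod_le_prod
          · intro r hr
            have := Finset.mem_range.1 hr
            have : (r : ℝ) ≤ (x : ℝ) := by exact_mod_cast le_of_lt (lt_of_lt_of_le this h)
            linarith
          · intro r _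
            have : (0:ℝ) ≤ r := by positivity
            linarith
      _ = (x:ℝ)^b := by simp

lemma fall_one (a : ℝ) : fallFact a 1 = a := by simp [fallFact]

lemma pow_le_fall_add (x m : ℕ) :
    (x : ℝ) ^ (m + 1) ≤ fallFact (x : ℝ) (m + 1) + ((m:ℝ) + 1) ^ 2 * (x : ℝ) ^ m := by
  induction m with
  | zero => simp [fall_one]
  | succ m ih =>
      have hx : (0:ℝ) ≤ (x:ℝ) := by positivity
      have h1 : (x:ℝ) ^ (m + 2) ≤ (fallFact (x:ℝ) (m+1) + ((m:ℝ)+1)^2 * (x:ℝ)^m) * x := by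
        calc (x:ℝ) ^ (m + 2) = (x:ℝ)^(m+1) * x := by ring
        _ ≤ _ := by nlinarith [ih]
      have h2 : fallFact (x:ℝ) (m+2) = fallFact (x:ℝ) (m+1) * ((x:ℝ) - (m+1)) := by
        rw [fallFact, fallFact, Finset.prod_range_succ]; push_cast; ring
      have h3 : fallFact (x:ℝ) (m+1) ≤ (x:ℝ)^(m+1) := fall_le_pow x (m+1)
      have h4 : 0 ≤ fallFact (x:ℝ) (m+1) := fall_nonneg x (m+1)
      calc (x:ℝ) ^ (m + 2) ≤ (fallFact (x:ℝ) (m+1) + ((m:ℝ)+1)^2 * (x:ℝ)^m) * x := h1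
        _ = fallFact (x:ℝ) (m+1) * ((x:ℝ) - (m+1)) + ((m:ℝ)+1) * fallFact (x:ℝ) (m+1)
              + ((m:ℝ)+1)^2 * ((x:ℝ)^m * x) := by ring
        _ ≤ fallFact (x:ℝ) (m+2) + ((m:ℝ)+1) * (x:ℝ)^(m+1) + ((m:ℝ)+1)^2 * (x:ℝ)^(m+1) := by
              rw [h2, pow_succ]
              have : ((m:ℝ)+1) * fallFact (x:ℝ) (m+1) ≤ ((m:ℝ)+1) * (x:ℝ)^(m+1) := by
                nlinarith
              have hps : (x:ℝ)^m * x = (x:ℝ)^(m+1) := (pow_succ _ _).symm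
              rw [hps]
              nlinarith [pow_nonneg hx (m+1)]
        _ ≤ fallFact (x:ℝ) (m+2) + ((m:ℝ)+1+1)^2 * (x:ℝ)^(m+1) := by
              nlinarith [pow_nonneg hx (m+1)]
        _ = fallFact (x:ℝ) (m+1+1) + (((m+1:ℕ):ℝ)+1)^2 * (x:ℝ)^(m+1) := by push_cast; ring

section
variable {N j : ℕ}

-- sum of c-th powers bounded by S^c, for 1 ≤ c
lemma sum_pow_le (m : Fin N → ℕ) {c : ℕ} (hc : 1 ≤ c) :
    ∑ i, ((m i : ℝ)) ^ c ≤ ((∑ i, m i : ℕ) : ℝ) ^ c := by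
  set S : ℕ := ∑ i, m i with hS
  obtain ⟨d, rfl⟩ : ∃ d, c = d + 1 := ⟨c - 1, by omega⟩
  have hmi : ∀ i, m i ≤ S := fun i => Finset.single_le_sum (f := m) (by intro i _; positivity) (Finset.mem_univ i)
  calc ∑ i, ((m i : ℝ)) ^ (d+1) ≤ ∑ i, (m i : ℝ) * (S : ℝ) ^ d := by
        apply Finset.sum_le_sum
        intro i _
        rw [pow_succ']
        apply mul_le_mul_of_nonneg_left _ (by positivity)
        exact pow_le_pow_left₀ (by positivity) (by exact_mod_cast hmi i) d
    _ = (S : ℝ) * (S:ℝ)^d := by rw [← Finset.sum_mul]; push_cast [hS]; ring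
    _ = (S : ℝ) ^ (d+1) := by rw [pow_succ]; ring

-- sum over embeddings of product of powers
lemma sum_emb_le (m : Fin N → ℕ) (c : Fin j → ℕ) (hc : ∀ k, 1 ≤ c k) :
    ∑ e : Fin j ↪ Fin N, ∏ k, ((m (e k) : ℝ)) ^ (c k)
      ≤ ((∑ i, m i : ℕ) : ℝ) ^ (∑ k, c k) := by
  have step1 : ∑ e : Fin j ↪ Fin N, ∏ k, ((m (e k) : ℝ)) ^ (c k)
      ≤ ∑ p : Fin j → Fin N, ∏ k, ((m (p k) : ℝ)) ^ (c k) := by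
    have himg : ∑ e : Fin j ↪ Fin N, ∏ k, ((m (e k) : ℝ)) ^ (c k)
        = ∑ p ∈ Finset.univ.image (fun e : Fin j ↪ Fin N => (e : Fin j → Fin N)),
            ∏ k, ((m (p k) : ℝ)) ^ (c k) := by
      rw [Finset.sum_image (fun e _ e' _ h => DFunLike.coe_injective h)]
    rw [himg]
    apply Finset.sum_le_sum_of_subset_of_nonneg (Finset.subset_univ _)
    intro p _ _
    positivity
  have step2 : ∑ p : Fin j → Fin N, ∏ k, ((m (p k) : ℝ)) ^ (c k)
      = ∏ k, ∑ i, ((m i : ℝ)) ^ (c k) := by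
    rw [Finset.prod_univ_sum, Fintype.piFinset_univ]
  calc _ ≤ ∑ p : Fin j → Fin N, ∏ k, ((m (p k) : ℝ)) ^ (c k) := step1
    _ = ∏ k, ∑ i, ((m i : ℝ)) ^ (c k) := step2
    _ ≤ ∏ k, ((∑ i, m i : ℕ) : ℝ) ^ (c k) := by
        apply Finset.prod_le_prod
        · intro k _; positivity
        · intro k _; exact sum_pow_le m (hc k)
    _ = ((∑ i, m i : ℕ) : ℝ) ^ (∑ k, c k) := by rw [← Finset.prod_pow_eq_pow_sum]

-- telescoping product difference
lemma prod_sub_prod_le {ι : Type*} [DecidableEq ι] (s : Finset ι) (a c : ι → ℝ)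
    (h0 : ∀ i ∈ s, 0 ≤ c i) (h1 : ∀ i ∈ s, c i ≤ a i) :
    ∏ i ∈ s, a i - ∏ i ∈ s, c i ≤ ∑ i ∈ s, (a i - c i) * ∏ l ∈ s.erase i, a l := by
  induction s using Finset.induction_on with
  | empty => simp
  | @insert i s his ih =>
      have h0' : ∀ l ∈ s, 0 ≤ c l := fun l hl => h0 l (Finset.mem_insert_of_mem hl)
      have h1' : ∀ l ∈ s, c l ≤ a l := fun l hl => h1 l (Finset.mem_insert_of_mem hl)
      have hci : 0 ≤ c i := h0 i (Finset.mem_insert_self i s)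
      have hai : c i ≤ a i := h1 i (Finset.mem_insert_self i s)
      have hpa : 0 ≤ ∏ l ∈ s, a l := Finset.prod_nonneg (fun l hl => (h0' l hl).trans (h1' l hl))
      have hpc0 : 0 ≤ ∏ l ∈ s, c l := Finset.prod_nonneg h0'
      have hpc : ∏ l ∈ s, c l ≤ ∏ l ∈ s, a l := Finset.prod_le_prod h0' h1'
      rw [Finset.prod_insert his, Finset.prod_insert his, Finset.sum_insert his]
      have key : a i * ∏ l ∈ s, a l - c i * ∏ l ∈ s, c l
          = a i * (∏ l ∈ s, a l - ∏ l ∈ s, c l) + (a i - c i) * ∏ l ∈ s, c l := by ring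
      rw [key]
      have e1 : (insert i s).erase i = s := Finset.erase_insert his
      rw [e1]
      have t1 : a i * (∏ l ∈ s, a l - ∏ l ∈ s, c l)
          ≤ a i * ∑ l ∈ s, (a l - c l) * ∏ r ∈ s.erase l, a r :=
        mul_le_mul_of_nonneg_left (ih h0' h1') (hci.trans hai)
      have t2 : (a i - c i) * ∏ l ∈ s, c l ≤ (a i - c i) * ∏ l ∈ s, a l :=
        mul_le_mul_of_nonneg_left hpc (by linarith)
      have t3 : a i * ∑ l ∈ s, (a l - c l) * ∏ r ∈ s.erase l, a r
          = ∑ l ∈ s, (a l - c l) * ∏ r ∈ (insert i s).erase l, a r := by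
        rw [Finset.mul_sum]
        apply Finset.sum_congr rfl
        intro l hl
        have hli : l ≠ i := fun h => his (h ▸ hl)
        rw [Finset.erase_insert_of_ne hli.symm, Finset.prod_insert (fun h => his (Finset.mem_of_mem_erase h))]
        ring
      linarith [t1, t2, t3.symm.le]
end

set_option maxHeartbeats 1000000 in
lemma pointwise_all {n N j : ℕ} (hn : 2 ≤ n) (m : Fin N → ℕ) (hS : 2 * n ^ 2 ≤ ∑ i, m i)
    (b : Fin j → ℕ) (hb : ∀ k, 1 ≤ b k) (hsum : ∑ k, b k = n) :
    |(∑ e : Fin j ↪ Fin N, ∏ k, fallFact ((m (e k) : ℕ) : ℝ) (b k)) /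
        fallFact (((∑ i, m i : ℕ) : ℝ)) n| ≤ 2 ∧
    |∑ e : Fin j ↪ Fin N, ∏ k, (((m (e k) : ℕ) : ℝ) / ((∑ i, m i : ℕ) : ℝ)) ^ (b k)| ≤ 1 ∧
    |(∑ e : Fin j ↪ Fin N, ∏ k, fallFact ((m (e k) : ℕ) : ℝ) (b k)) /
        fallFact (((∑ i, m i : ℕ) : ℝ)) n -
      ∑ e : Fin j ↪ Fin N, ∏ k, (((m (e k) : ℕ) : ℝ) / ((∑ i, m i : ℕ) : ℝ)) ^ (b k)|
      ≤ 3 * (n:ℝ)^2 * (1 / ((∑ i, m i : ℕ) : ℝ)) := by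
  set S : ℕ := ∑ i, m i with hSdef
  set s : ℝ := (S : ℝ) with hsdef
  have hSpos : 0 < S := lt_of_lt_of_le (by positivity) hS
  have hs0 : 0 < s := by rw [hsdef]; exact_mod_cast hSpos
  have hs2 : 2 * (n:ℝ)^2 ≤ s := by rw [hsdef]; exact_mod_cast hS
  set u : ℝ := ∑ e : Fin j ↪ Fin N, ∏ k, fallFact ((m (e k) : ℕ) : ℝ) (b k) with hudef
  set v : ℝ := ∑ e : Fin j ↪ Fin N, ∏ k, ((m (e k) : ℝ)) ^ (b k) with hvdef
  set q : ℝ := s ^ n with hqdef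
  set F : ℝ := fallFact s n with hFdef
  have hq : 0 < q := by positivity
  -- basic facts
  have hu0 : 0 ≤ u := by
    apply Finset.sum_nonneg; intro e _
    exact Finset.prod_nonneg fun k _ => fall_nonneg _ _
  have huv : u ≤ v := by
    apply Finset.sum_le_sum; intro e _
    exact Finset.prod_le_prod (fun k _ => fall_nonneg _ _) (fun k _ => fall_le_pow _ _)
  have hvq : v ≤ q := by
    have := sum_emb_le m b hb
    rwa [hsum] at this
  have hn1 : n - 1 + 1 = n := by omega
  have hcast : ((n - 1 : ℕ) : ℝ) + 1 = (n : ℝ) := by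
    have h := Nat.cast_sub (R := ℝ) (show 1 ≤ n by omega)
    rw [h]; push_cast; ring
  have hqF : q - F ≤ (n:ℝ)^2 * s ^ (n-1) := by
    have := pow_le_fall_add S (n - 1)
    rw [hn1, hcast] at this
    rw [hqdef, hFdef]
    linarith
  have hFq : F ≤ q := fall_le_pow S n
  have hqs : s ^ (n-1) * s = q := by
    rw [hqdef, ← pow_succ, hn1]
  have hsn1 : (0:ℝ) < s ^ (n-1) := by positivity
  have hF2 : q / 2 ≤ F := by
    have h1 : q - (n:ℝ)^2 * s^(n-1) ≤ F := by linarith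
    have h2 : q / 2 ≤ q - (n:ℝ)^2 * s^(n-1) := by
      have : (n:ℝ)^2 * s^(n-1) ≤ (s/2) * s^(n-1) := by
        apply mul_le_mul_of_nonneg_right (by linarith) hsn1.le
      nlinarith
    linarith
  have hFpos : 0 < F := lt_of_lt_of_le (by positivity) hF2
  -- telescoping bound : v - u ≤ n^2 * s^(n-1)
  have hbn : ∀ k, b k ≤ n := by
    intro k
    rw [← hsum]
    exact Finset.single_le_sum (f := b) (fun l _ => Nat.zero_le _) (Finset.mem_univ k)
  have hvu : v - u ≤ (n:ℝ)^2 * s ^ (n-1) := by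
    have step1 : v - u ≤ ∑ e : Fin j ↪ Fin N, ∑ k,
        (((m (e k) : ℝ)) ^ (b k) - fallFact ((m (e k) : ℝ)) (b k)) *
          ∏ l ∈ Finset.univ.erase k, ((m (e l) : ℝ)) ^ (b l) := by
      rw [hvdef, hudef, ← Finset.sum_sub_distrib]
      apply Finset.sum_le_sum; intro e _
      exact prod_sub_prod_le Finset.univ _ _ (fun k _ => fall_nonneg _ _)
        (fun k _ => fall_le_pow _ _)
    rw [Finset.sum_comm] at step1
    have step2 : ∀ k : Fin j, (∑ e : Fin j ↪ Fin N,
        (((m (e k) : ℝ)) ^ (b k) - fallFact ((m (e k) : ℝ)) (b k)) *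
          ∏ l ∈ Finset.univ.erase k, ((m (e l) : ℝ)) ^ (b l))
        ≤ (if b k = 1 then 0 else ((b k : ℝ))^2) * s ^ (n-1) := by
      intro k
      by_cases hbk : b k = 1
      · simp only [hbk, if_true]
        rw [zero_mul]
        apply le_of_eq
        apply Finset.sum_eq_zero; intro e _
        rw [pow_one, fall_one, sub_self, zero_mul]
      · simp only [hbk, if_false]
        -- exponents after reduction
        set c : Fin j → ℕ := Function.update b k (b k - 1) with hcdef
        have hck : c k = b k - 1 := Function.update_self _ _ _
        have hcl : ∀ l, l ≠ k → c l = b l := fun l hl => Function.update_of_ne hl _ _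
        have hc1 : ∀ l, 1 ≤ c l := by
          intro l
          by_cases h : l = k
          · rw [h, hck]; have := hb k; omega
          · rw [hcl l h]; exact hb l
        have hcsum : ∑ l, c l = n - 1 := by
          have h1 : ∑ l, c l = c k + ∑ l ∈ Finset.univ.erase k, c l :=
            (Finset.add_sum_erase _ _ (Finset.mem_univ k)).symm
          have h2 : ∑ l, b l = b k + ∑ l ∈ Finset.univ.erase k, b l :=
            (Finset.add_sum_erase _ _ (Finset.mem_univ k)).symm
          have h3 : ∑ l ∈ Finset.univ.erase k, c l = ∑ l ∈ Finset.univ.erase k, b l := by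
            apply Finset.sum_congr rfl
            intro l hl
            exact hcl l (Finset.ne_of_mem_erase hl)
          have h4 : b k + ∑ l ∈ Finset.univ.erase k, b l = n := by rw [← h2, hsum]
          have h5 := hb k
          rw [h1, h3, hck]
          omega
        have hterm : ∀ e : Fin j ↪ Fin N,
            (((m (e k) : ℝ)) ^ (b k) - fallFact ((m (e k) : ℝ)) (b k)) *
              ∏ l ∈ Finset.univ.erase k, ((m (e l) : ℝ)) ^ (b l)
            ≤ ((b k : ℝ))^2 * ∏ l, ((m (e l) : ℝ)) ^ (c l) := by
          intro e
          have hdiff : (((m (e k) : ℝ)) ^ (b k) - fallFact ((m (e k) : ℝ)) (b k))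
              ≤ ((b k : ℝ))^2 * ((m (e k) : ℝ)) ^ (b k - 1) := by
            have := pow_le_fall_add (m (e k)) (b k - 1)
            have hbk1 : b k - 1 + 1 = b k := by have := hb k; omega
            rw [hbk1] at this
            have hc2 : ((b k - 1 : ℕ) : ℝ) + 1 = (b k : ℝ) := by
              rw [Nat.cast_sub (hb k)]; ring
            rw [hc2] at this
            linarith
          have hprodpos : 0 ≤ ∏ l ∈ Finset.univ.erase k, ((m (e l) : ℝ)) ^ (b l) := by
            apply Finset.prod_nonneg; intro l _; positivity
          have hsplit : ∏ l, ((m (e l) : ℝ)) ^ (c l)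
              = ((m (e k) : ℝ)) ^ (b k - 1) * ∏ l ∈ Finset.univ.erase k, ((m (e l) : ℝ)) ^ (b l) := by
            rw [← Finset.mul_prod_erase _ _ (Finset.mem_univ k), hck]
            congr 1
            apply Finset.prod_congr rfl
            intro l hl
            rw [hcl l (Finset.ne_of_mem_erase hl)]
          calc _ ≤ (((b k : ℝ))^2 * ((m (e k) : ℝ)) ^ (b k - 1)) *
                ∏ l ∈ Finset.univ.erase k, ((m (e l) : ℝ)) ^ (b l) :=
              mul_le_mul_of_nonneg_right hdiff hprodpos
            _ = ((b k : ℝ))^2 * ∏ l, ((m (e l) : ℝ)) ^ (c l) := by rw [hsplit]; ring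
        calc _ ≤ ∑ e : Fin j ↪ Fin N, ((b k : ℝ))^2 * ∏ l, ((m (e l) : ℝ)) ^ (c l) :=
            Finset.sum_le_sum fun e _ => hterm e
          _ = ((b k : ℝ))^2 * ∑ e : Fin j ↪ Fin N, ∏ l, ((m (e l) : ℝ)) ^ (c l) := by
              rw [Finset.mul_sum]
          _ ≤ ((b k : ℝ))^2 * s ^ (n-1) := by
              apply mul_le_mul_of_nonneg_left _ (by positivity)
              have := sum_emb_le m c hc1
              rwa [hcsum] at this
    have step3 : ∑ k : Fin j, (if b k = 1 then (0:ℝ) else ((b k : ℝ))^2) * s ^ (n-1)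
        ≤ (n:ℝ)^2 * s ^ (n-1) := by
      rw [← Finset.sum_mul]
      apply mul_le_mul_of_nonneg_right _ hsn1.le
      calc ∑ k : Fin j, (if b k = 1 then (0:ℝ) else ((b k : ℝ))^2)
          ≤ ∑ k : Fin j, (b k : ℝ) * (n : ℝ) := by
            apply Finset.sum_le_sum; intro k _
            by_cases hbk : b k = 1
            · simp only [hbk, if_true]; positivity
            · simp only [hbk, if_false]
              have h1 : (b k : ℝ) ≤ (n : ℝ) := by exact_mod_cast hbn k
              have h2 : (0:ℝ) ≤ (b k : ℝ) := by positivity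
              nlinarith
        _ = (n:ℝ)^2 := by
            rw [← Finset.sum_mul]
            have : ∑ k, (b k : ℝ) = (n:ℝ) := by exact_mod_cast congrArg (Nat.cast (R := ℝ)) hsum
            rw [this]; ring
    calc v - u ≤ _ := step1
      _ ≤ ∑ k : Fin j, (if b k = 1 then (0:ℝ) else ((b k : ℝ))^2) * s ^ (n-1) :=
          Finset.sum_le_sum fun k _ => step2 k
      _ ≤ (n:ℝ)^2 * s ^ (n-1) := step3
  -- rewrite the power-sum as v / q
  have hpow_eq : ∑ e : Fin j ↪ Fin N, ∏ k, (((m (e k) : ℕ) : ℝ) / s) ^ (b k) = v / q := by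
    rw [hvdef, hqdef, Finset.sum_div]
    apply Finset.sum_congr rfl
    intro e _
    rw [← hsum, ← Finset.prod_pow_eq_pow_sum, ← Finset.prod_div_distrib]
    apply Finset.prod_congr rfl
    intro k _
    rw [div_pow]
  set ε : ℝ := (n:ℝ)^2 * s ^ (n-1) with hεdef
  have hε0 : 0 ≤ ε := by positivity
  have hεq : ε / q = (n:ℝ)^2 / s := by
    rw [hεdef, ← hqs]
    field_simp
  have huq : u ≤ q := le_trans huv hvq
  -- first bound : |u / F| ≤ 2
  have hb1 : |u / F| ≤ 2 := by
    rw [abs_of_nonneg (div_nonneg hu0 hFpos.le)]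
    rw [div_le_iff₀ hFpos]
    linarith
  have hb2 : |v / q| ≤ 1 := by
    rw [abs_of_nonneg (div_nonneg (le_trans hu0 huv) hq.le)]
    rw [div_le_one hq]
    exact hvq
  have hub : u / F - v / q ≤ 3 * ε / q := by
    have h1 : u / q ≤ v / q := by gcongr
    have h2 : u / F - u / q = u * (q - F) / (F * q) := by field_simp
    have h3 : u * (q - F) / (F * q) ≤ (q * ε) / ((q/2) * q) := by
      apply div_le_div₀ (by positivity) ?_ (by positivity) ?_
      · exact mul_le_mul huq hqF (by linarith) hq.le
      · exact mul_le_mul_of_nonneg_right hF2 hq.le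
    have h4 : (q * ε) / ((q/2) * q) = 2 * ε / q := by
      field_simp
    have hεq0 : 0 ≤ ε / q := by positivity
    have h6 : u / F - u / q ≤ 2 * ε / q := by rw [h2, ← h4]; exact h3
    have h5 : 2 * ε / q ≤ 3 * ε / q := by gcongr; linarith
    linarith
  have hlb : v / q - u / F ≤ 3 * ε / q := by
    have hA : u / q ≤ u / F := div_le_div_of_nonneg_left hu0 hFpos hFq
    have hB : v / q - u / q = (v - u) / q := (sub_div _ _ _).symm
    have hC : (v - u) / q ≤ ε / q := (div_le_div_iff_of_pos_right hq).2 hvu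
    have hεq0 : 0 ≤ ε / q := by positivity
    have hD : 3 * ε / q = 3 * (ε / q) := mul_div_assoc 3 ε q
    linarith
  have h3ε : 3 * ε / q = 3 * (n:ℝ)^2 * (1/s) := by
    rw [mul_div_assoc, hεq]
    ring
  refine ⟨hb1, ?_, ?_⟩
  · rw [hpow_eq]; exact hb2
  · rw [hpow_eq, abs_sub_le_iff]
    rw [h3ε] at hub hlb
    exact ⟨hub, hlb⟩

/-- For every `n ≥ 2` there are `C(n) > 0` and `N₀` such that for all `N ≥ N₀` and every
random vector `ν = (ν_1, …, ν_N)` of nonnegative integers with `Σ_N = ν_1 + ⋯ + ν_N ≥ N` a.s.,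
and every tuple of positive integers `(b_1, …, b_j)` summing to `n`, the difference between
the without-replacement coagulation probability (falling factorials over `(Σ_N)_n`) and the
with-replacement one (powers of `ν_i/Σ_N`) is at most `C(n) E[1/Σ_N]`. -/
theorem stmt1 (n : ℕ) (hn : 2 ≤ n) :
    ∃ C : ℝ, 0 < C ∧ ∃ N₀ : ℕ, ∀ N : ℕ, N₀ ≤ N →
      ∀ (Ω : Type) (_ : MeasurableSpace Ω) (μ : Measure Ω), IsProbabilityMeasure μ →
      ∀ ν : Ω → Fin N → ℕ, Measurable ν →
      (∀ᵐ ω ∂μ, N ≤ ∑ i, ν ω i) →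
      ∀ (j : ℕ) (b : Fin j → ℕ), (∀ k, 1 ≤ b k) → (∑ k, b k = n) →
      |(∫ ω, (∑ e : Fin j ↪ Fin N, ∏ k, fallFact ((ν ω (e k) : ℕ) : ℝ) (b k)) /
            fallFact (((∑ i, ν ω i : ℕ) : ℝ)) n ∂μ) -
          ∫ ω, ∑ e : Fin j ↪ Fin N,
            ∏ k, (((ν ω (e k) : ℕ) : ℝ) / ((∑ i, ν ω i : ℕ) : ℝ)) ^ (b k) ∂μ|
        ≤ C * ∫ ω, 1 / ((∑ i, ν ω i : ℕ) : ℝ) ∂μ := by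
  have hnR : (0:ℝ) < (n:ℝ) := by exact_mod_cast lt_of_lt_of_le (by norm_num) hn
  refine ⟨3 * (n:ℝ)^2, by positivity, 2 * n ^ 2, ?_⟩
  intro N hN Ω mΩ μ hμ ν hν hae j b hb hsum
  set f : Ω → ℝ := fun ω => (∑ e : Fin j ↪ Fin N, ∏ k, fallFact ((ν ω (e k) : ℕ) : ℝ) (b k)) /
      fallFact (((∑ i, ν ω i : ℕ) : ℝ)) n with hfdef
  set g : Ω → ℝ := fun ω => ∑ e : Fin j ↪ Fin N,
      ∏ k, (((ν ω (e k) : ℕ) : ℝ) / ((∑ i, ν ω i : ℕ) : ℝ)) ^ (b k) with hgdef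
  set h : Ω → ℝ := fun ω => 1 / ((∑ i, ν ω i : ℕ) : ℝ) with hhdef
  have hf_m : Measurable f :=
    (measurable_of_countable (fun m : Fin N → ℕ =>
      (∑ e : Fin j ↪ Fin N, ∏ k, fallFact ((m (e k) : ℕ) : ℝ) (b k)) /
        fallFact (((∑ i, m i : ℕ) : ℝ)) n)).comp hν
  have hg_m : Measurable g :=
    (measurable_of_countable (fun m : Fin N → ℕ => ∑ e : Fin j ↪ Fin N,
      ∏ k, (((m (e k) : ℕ) : ℝ) / ((∑ i, m i : ℕ) : ℝ)) ^ (b k))).comp hν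
  have hh_m : Measurable h :=
    (measurable_of_countable (fun m : Fin N → ℕ => 1 / ((∑ i, m i : ℕ) : ℝ))).comp hν
  have haeP : ∀ᵐ ω ∂μ, |f ω| ≤ 2 ∧ |g ω| ≤ 1 ∧
      |f ω - g ω| ≤ 3 * (n:ℝ)^2 * h ω := by
    filter_upwards [hae] with ω hω
    exact pointwise_all hn (ν ω) (le_trans hN hω) b hb hsum
  have haeh : ∀ᵐ ω ∂μ, |h ω| ≤ 1 := by
    filter_upwards [hae] with ω hω
    have hS1 : (1:ℕ) ≤ ∑ i, ν ω i := le_trans (by nlinarith [hn] : 1 ≤ 2 * n ^ 2) (le_trans hN hω)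
    have hs1 : (1:ℝ) ≤ ((∑ i, ν ω i : ℕ) : ℝ) := by exact_mod_cast hS1
    rw [hhdef]
    simp only []
    rw [abs_of_nonneg (by positivity)]
    rw [div_le_one (by linarith)]
    linarith
  have hfi : Integrable f μ := by
    apply Integrable.mono' (integrable_const (2:ℝ)) hf_m.aestronglyMeasurable
    filter_upwards [haeP] with ω hω
    rw [Real.norm_eq_abs]; exact hω.1
  have hgi : Integrable g μ := by
    apply Integrable.mono' (integrable_const (1:ℝ)) hg_m.aestronglyMeasurable
    filter_upwards [haeP] with ω hω
    rw [Real.norm_eq_abs]; exact hω.2.1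
  have hhi : Integrable h μ := by
    apply Integrable.mono' (integrable_const (1:ℝ)) hh_m.aestronglyMeasurable
    filter_upwards [haeh] with ω hω
    rw [Real.norm_eq_abs]; exact hω
  calc |(∫ ω, f ω ∂μ) - ∫ ω, g ω ∂μ| = |∫ ω, (f ω - g ω) ∂μ| := by
        rw [integral_sub hfi hgi]
    _ ≤ ∫ ω, |f ω - g ω| ∂μ := by
        have := norm_integral_le_integral_norm (μ := μ) (f := fun ω => f ω - g ω)
        simpa [Real.norm_eq_abs] using this
    _ ≤ ∫ ω, 3 * (n:ℝ)^2 * h ω ∂μ := by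
        apply integral_mono_ae ((hfi.sub hgi).abs) (hhi.const_mul _)
        filter_upwards [haeP] with ω hω
        exact hω.2.2
    _ = 3 * (n:ℝ)^2 * ∫ ω, h ω ∂μ := integral_const_mul _ _
end

section
/- For each N ≥ 2 let (ν^{(N)}_1, …, ν^{(N)}_N) be a random vector of nonnegative integers with Σ_N := ν^{(N)}_1 + ⋯ + ν^{(N)}_N ≥ N almost surely. Define c_N = E[ Σ_{i=1}^N (ν^{(N)}_i/Σ_N)² ] and c̃_N = E[ Σ_{i=1}^N ν^{(N)}_i(ν^{(N)}_i − 1) / (Σ_N(Σ_N − 1)) ]. If c_N / E[1/Σ_N] → ∞ as N → ∞, or if c̃_N / E[1/Σ_N] → ∞ as N → ∞, then c̃_N / c_N → 1 as N → ∞. -/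
open MeasureTheory Filter

/-- Equivalence of with- and without-replacement pair-coalescence probabilities:
if `c N / E[1/Σ_N] → ∞` or `c̃ N / E[1/Σ_N] → ∞`, then `c̃ N / c N → 1`. -/
theorem stmt2
    (Ω : ℕ → Type) (mΩ : ∀ N, MeasurableSpace (Ω N)) (μ : ∀ N, Measure (Ω N))
    (hprob : ∀ N, IsProbabilityMeasure (μ N))
    (ν : ∀ N, Ω N → Fin N → ℕ)
    (hmeas : ∀ N, Measurable (ν N))
    (hsize : ∀ N, 2 ≤ N → ∀ᵐ ω ∂μ N, N ≤ ∑ i, ν N ω i)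
    (c ct e : ℕ → ℝ)
    (hc : ∀ N, c N = ∫ ω, ∑ i, (((ν N ω i : ℕ) : ℝ) / ((∑ k, ν N ω k : ℕ) : ℝ)) ^ 2 ∂μ N)
    (hct : ∀ N, ct N = ∫ ω, ∑ i, (((ν N ω i : ℕ) : ℝ) * (((ν N ω i : ℕ) : ℝ) - 1)) /
        (((∑ k, ν N ω k : ℕ) : ℝ) * (((∑ k, ν N ω k : ℕ) : ℝ) - 1)) ∂μ N)
    (he : ∀ N, e N = ∫ ω, 1 / ((∑ k, ν N ω k : ℕ) : ℝ) ∂μ N)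
    (hdiv : Tendsto (fun N => c N / e N) atTop atTop ∨
            Tendsto (fun N => ct N / e N) atTop atTop) :
    Tendsto (fun N => ct N / c N) atTop (nhds 1) := by
  -- Key per-N facts
  have key : ∀ N, 2 ≤ N → 0 ≤ ct N ∧ ct N ≤ c N ∧ c N - ct N ≤ e N ∧ 0 < e N := by
    intro N hN
    haveI := hprob N
    set F : Ω N → ℝ := fun ω => ∑ i, (((ν N ω i : ℕ) : ℝ) / ((∑ k, ν N ω k : ℕ) : ℝ)) ^ 2
      with hF
    set G : Ω N → ℝ := fun ω => ∑ i, (((ν N ω i : ℕ) : ℝ) * (((ν N ω i : ℕ) : ℝ) - 1)) /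
        (((∑ k, ν N ω k : ℕ) : ℝ) * (((∑ k, ν N ω k : ℕ) : ℝ) - 1)) with hG
    set H : Ω N → ℝ := fun ω => 1 / ((∑ k, ν N ω k : ℕ) : ℝ) with hH
    -- measurability
    have hνi : ∀ i : Fin N, Measurable fun ω => ((ν N ω i : ℕ) : ℝ) := fun i =>
      measurable_from_top.comp ((measurable_pi_apply i).comp (hmeas N))
    have hSm : Measurable fun ω => ((∑ k, ν N ω k : ℕ) : ℝ) := by
      refine measurable_from_top.comp ?_
      exact Finset.measurable_sum _ fun i _ => (measurable_pi_apply i).comp (hmeas N)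
    have hFm : Measurable F :=
      Finset.measurable_sum _ fun i _ => ((hνi i).div hSm).pow_const 2
    have hGm : Measurable G :=
      Finset.measurable_sum _ fun i _ =>
        ((hνi i).mul ((hνi i).sub measurable_const)).div
          (hSm.mul (hSm.sub measurable_const))
    have hHm : Measurable H := measurable_const.div hSm
    -- a.e. event
    have hae := hsize N hN
    -- pointwise facts on the event
    have hpt : ∀ ω, N ≤ ∑ i, ν N ω i →
        0 ≤ G ω ∧ G ω ≤ F ω ∧ F ω - G ω ≤ H ω ∧ F ω ≤ 1 ∧ 0 < H ω ∧ H ω ≤ 1 := by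
      intro ω hω
      set Sr : ℝ := ((∑ k, ν N ω k : ℕ) : ℝ) with hSr
      set Ar : ℝ := ∑ i, ((ν N ω i : ℕ) : ℝ) ^ 2 with hAr
      have h2 : (2 : ℝ) ≤ Sr := by
        have h' : (2 : ℕ) ≤ ∑ k, ν N ω k := le_trans hN hω
        rw [hSr]; exact_mod_cast h'
      have hS0 : Sr ≠ 0 := by linarith
      have hS1 : Sr - 1 ≠ 0 := by intro h; nlinarith
      have hSsum : Sr = ∑ i, ((ν N ω i : ℕ) : ℝ) := by push_cast [hSr]; rfl
      have hSA : Sr ≤ Ar := by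
        rw [hSsum, hAr]
        refine Finset.sum_le_sum fun i _ => ?_
        rcases Nat.eq_zero_or_pos (ν N ω i) with h | h
        · simp [h]
        · have h1 : (1 : ℝ) ≤ ((ν N ω i : ℕ) : ℝ) := by exact_mod_cast h
          nlinarith
      have hAS2 : Ar ≤ Sr ^ 2 := by
        rw [hSsum, hAr]
        exact Finset.sum_sq_le_sq_sum_of_nonneg fun i _ => by positivity
      have hFval : F ω = Ar / Sr ^ 2 := by
        simp only [hF, hAr, div_pow, ← Finset.sum_div]; rfl
      have hGval : G ω = (Ar - Sr) / (Sr * (Sr - 1)) := by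
        simp only [hG, ← Finset.sum_div]
        congr 1
        rw [hAr, hSsum, ← Finset.sum_sub_distrib]
        exact Finset.sum_congr rfl fun i _ => by ring
      have hHval : H ω = 1 / Sr := rfl
      have hden : (0 : ℝ) < Sr * (Sr - 1) := by nlinarith
      have hSq : (0 : ℝ) < Sr ^ 2 := by positivity
      refine ⟨?_, ?_, ?_, ?_, ?_, ?_⟩
      · rw [hGval]; exact div_nonneg (by linarith) hden.le
      · have : F ω - G ω = (Sr ^ 2 - Ar) / (Sr ^ 2 * (Sr - 1)) := by
          rw [hFval, hGval]; field_simp; ring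
        nlinarith [div_nonneg (by linarith : (0:ℝ) ≤ Sr ^ 2 - Ar)
          (by nlinarith : (0:ℝ) ≤ Sr ^ 2 * (Sr - 1))]
      · have heq : F ω - G ω = (Sr ^ 2 - Ar) / (Sr ^ 2 * (Sr - 1)) := by
          rw [hFval, hGval]; field_simp; ring
        rw [heq, hHval, div_le_div_iff₀ (by nlinarith) (by linarith)]
        nlinarith
      · rw [hFval, div_le_one hSq]; linarith
      · rw [hHval]; positivity
      · rw [hHval]; rw [div_le_one (by linarith)]; linarith
    -- integrability
    have haeG0 : 0 ≤ᵐ[μ N] G := hae.mono fun ω h => (hpt ω h).1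
    have haeGF : G ≤ᵐ[μ N] F := hae.mono fun ω h => (hpt ω h).2.1
    have haeFGH : ∀ᵐ ω ∂μ N, F ω - G ω ≤ H ω := hae.mono fun ω h => (hpt ω h).2.2.1
    have haeF1 : ∀ᵐ ω ∂μ N, F ω ≤ 1 := hae.mono fun ω h => (hpt ω h).2.2.2.1
    have haeH0 : ∀ᵐ ω ∂μ N, 0 < H ω := hae.mono fun ω h => (hpt ω h).2.2.2.2.1
    have haeH1 : ∀ᵐ ω ∂μ N, H ω ≤ 1 := hae.mono fun ω h => (hpt ω h).2.2.2.2.2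
    have hFabs : ∀ᵐ ω ∂μ N, ‖F ω‖ ≤ 1 := by
      filter_upwards [haeG0, haeGF, haeF1] with ω h0 h1 h2
      simp only [Pi.zero_apply] at h0
      rw [Real.norm_eq_abs, abs_le]; constructor <;> linarith
    have hGabs : ∀ᵐ ω ∂μ N, ‖G ω‖ ≤ 1 := by
      filter_upwards [haeG0, haeGF, haeF1] with ω h0 h1 h2
      simp only [Pi.zero_apply] at h0
      rw [Real.norm_eq_abs, abs_le]; constructor <;> linarith
    have hHabs : ∀ᵐ ω ∂μ N, ‖H ω‖ ≤ 1 := by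
      filter_upwards [haeH0, haeH1] with ω h0 h1
      rw [Real.norm_eq_abs, abs_le]; constructor <;> linarith
    have hFint : Integrable F (μ N) :=
      Integrable.mono' (integrable_const 1) hFm.aestronglyMeasurable hFabs
    have hGint : Integrable G (μ N) :=
      Integrable.mono' (integrable_const 1) hGm.aestronglyMeasurable hGabs
    have hHint : Integrable H (μ N) :=
      Integrable.mono' (integrable_const 1) hHm.aestronglyMeasurable hHabs
    have hcN : c N = ∫ ω, F ω ∂μ N := hc N
    have hctN : ct N = ∫ ω, G ω ∂μ N := hct N
    have heN : e N = ∫ ω, H ω ∂μ N := he N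
    refine ⟨?_, ?_, ?_, ?_⟩
    · rw [hctN]; exact integral_nonneg_of_ae haeG0
    · rw [hctN, hcN]; exact integral_mono_ae hGint hFint haeGF
    · rw [hctN, hcN, heN, ← integral_sub hFint hGint]
      exact integral_mono_ae (hFint.sub hGint) hHint haeFGH
    · rw [heN]
      rw [integral_pos_iff_support_of_nonneg_ae (haeH0.mono fun ω h => h.le) hHint]
      have hsub : {ω | N ≤ ∑ i, ν N ω i} ⊆ Function.support H := by
        intro ω hω
        exact ne_of_gt (hpt ω hω).2.2.2.2.1
      have h1 : μ N {ω | N ≤ ∑ i, ν N ω i}ᶜ = 0 := by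
        simpa [Set.compl_setOf] using ae_iff.mp hae
      calc (0 : ENNReal) < 1 := by norm_num
        _ = μ N Set.univ := (measure_univ).symm
        _ ≤ μ N ({ω | N ≤ ∑ i, ν N ω i}ᶜ ∪ Function.support H) := by
            refine measure_mono fun ω _ => ?_
            by_cases h : N ≤ ∑ i, ν N ω i
            · exact Or.inr (hsub h)
            · exact Or.inl h
        _ ≤ μ N {ω | N ≤ ∑ i, ν N ω i}ᶜ + μ N (Function.support H) := measure_union_le _ _
        _ = μ N (Function.support H) := by rw [h1, zero_add]
  -- c/e → ∞ in both cases
  have hce : Tendsto (fun N => c N / e N) atTop atTop := by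
    rcases hdiv with h | h
    · exact h
    · refine tendsto_atTop_mono' atTop ?_ h
      filter_upwards [eventually_ge_atTop 2] with N hN
      obtain ⟨_, h1, _, h3⟩ := key N hN
      exact (div_le_div_iff_of_pos_right h3).mpr h1
  have hec : Tendsto (fun N => e N / c N) atTop (nhds 0) := by
    have h := hce.inv_tendsto_atTop
    refine h.congr fun N => ?_
    simp [inv_div]
  -- squeeze
  have h1 : Tendsto (fun N => 1 - e N / c N) atTop (nhds 1) := by
    simpa using tendsto_const_nhds.sub hec
  refine tendsto_of_tendsto_of_tendsto_of_le_of_le' h1 tendsto_const_nhds ?_ ?_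
  · filter_upwards [eventually_ge_atTop 2, hce.eventually_ge_atTop 1] with N hN hN1
    obtain ⟨h0, hle, hsub, hepos⟩ := key N hN
    have hcpos : 0 < c N := by
      have : e N ≤ c N := (one_le_div hepos).mp hN1
      linarith
    rw [sub_le_iff_le_add, ← add_div, le_div_iff₀ hcpos]
    nlinarith
  · filter_upwards [eventually_ge_atTop 2, hce.eventually_ge_atTop 1] with N hN hN1
    obtain ⟨h0, hle, hsub, hepos⟩ := key N hN
    have hcpos : 0 < c N := by
      have : e N ≤ c N := (one_le_div hepos).mp hN1
      linarith
    exact div_le_one_of_le₀ hle hcpos.le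
end

section
/- Let Λ be a nonzero finite measure on [0,1], and for integers n ≥ b ≥ 2 set λ_{n,b} = ∫_{[0,1]} x^{b−2}(1−x)^{n−b} Λ(dx). Let (X_N)_{N≥1} be random variables with values in [0,1] and let (c_N)_{N≥1} be strictly positive reals. Assume that for every integer b ≥ 2, E[X_N^b]/c_N → λ_{b,b}/λ_{2,2} as N → ∞. Then for all integers n ≥ b ≥ 2, E[X_N^b (1−X_N)^{n−b}]/c_N → λ_{n,b}/λ_{2,2} as N → ∞. -/
open MeasureTheory Filter

/-- If `E[X_N^b]/c_N → λ_{b,b}/λ_{2,2}` for all `b ≥ 2`, where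
`λ_{n,b} = ∫ x^(b-2) (1-x)^(n-b) Λ(dx)` for a nonzero finite measure `Λ` on `[0,1]`,
then `E[X_N^b (1-X_N)^(n-b)]/c_N → λ_{n,b}/λ_{2,2}` for all `n ≥ b ≥ 2`. -/
theorem stmt3
    {Ω : Type*} [MeasurableSpace Ω] (μ : Measure Ω) [IsProbabilityMeasure μ]
    (Λ : Measure ℝ) [IsFiniteMeasure Λ] (hΛsupp : Λ ((Set.Icc (0:ℝ) 1)ᶜ) = 0)
    (hΛne : Λ ≠ 0)
    (X : ℕ → Ω → ℝ) (hXmeas : ∀ N, Measurable (X N))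
    (hX : ∀ N ω, X N ω ∈ Set.Icc (0:ℝ) 1)
    (c : ℕ → ℝ) (hc : ∀ N, 0 < c N)
    (lam : ℕ → ℕ → ℝ)
    (hlam : ∀ n b : ℕ, lam n b = ∫ x, x ^ (b - 2) * (1 - x) ^ (n - b) ∂Λ)
    (hmom : ∀ b : ℕ, 2 ≤ b →
      Tendsto (fun N => (∫ ω, X N ω ^ b ∂μ) / c N) atTop (nhds (lam b b / lam 2 2))) :
    ∀ n b : ℕ, 2 ≤ b → b ≤ n →
      Tendsto (fun N => (∫ ω, X N ω ^ b * (1 - X N ω) ^ (n - b) ∂μ) / c N)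
        atTop (nhds (lam n b / lam 2 2)) := by
  -- integrability over μ
  have hXint : ∀ (N j k : ℕ), Integrable (fun ω => X N ω ^ j * (1 - X N ω) ^ k) μ := by
    intro N j k
    apply Integrable.mono' (integrable_const (1:ℝ))
    · exact (((hXmeas N).pow_const j).mul
        ((measurable_const.sub (hXmeas N)).pow_const k)).aestronglyMeasurable
    · filter_upwards with ω
      have h0 := (hX N ω).1; have h1 := (hX N ω).2
      simp only [Real.norm_eq_abs, abs_mul, abs_pow]
      have ha : |X N ω| ≤ 1 := abs_le.2 ⟨by linarith, h1⟩
      have hb : |1 - X N ω| ≤ 1 := abs_le.2 ⟨by linarith, by linarith⟩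
      calc |X N ω| ^ j * |1 - X N ω| ^ k ≤ 1 ^ j * 1 ^ k := by
            gcongr <;> positivity
        _ = 1 := by norm_num
  -- a.e. membership for Λ
  have hae : ∀ᵐ x ∂Λ, x ∈ Set.Icc (0:ℝ) 1 := by
    rw [ae_iff]
    exact hΛsupp
  have hΛint : ∀ (j k : ℕ), Integrable (fun x : ℝ => x ^ j * (1 - x) ^ k) Λ := by
    intro j k
    apply Integrable.mono' (integrable_const (1:ℝ))
    · exact ((measurable_id.pow_const j).mul
        ((measurable_const.sub measurable_id).pow_const k)).aestronglyMeasurable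
    · filter_upwards [hae] with x hx
      have h0 := hx.1; have h1 := hx.2
      simp only [Real.norm_eq_abs, abs_mul, abs_pow]
      have ha : |x| ≤ 1 := abs_le.2 ⟨by linarith, h1⟩
      have hb : |1 - x| ≤ 1 := abs_le.2 ⟨by linarith, by linarith⟩
      calc |x| ^ j * |1 - x| ^ k ≤ 1 ^ j * 1 ^ k := by
            gcongr <;> positivity
        _ = 1 := by norm_num
  -- main claim by induction on m = n - b
  have key : ∀ m : ℕ, ∀ b : ℕ, 2 ≤ b →
      Tendsto (fun N => (∫ ω, X N ω ^ b * (1 - X N ω) ^ m ∂μ) / c N)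
        atTop (nhds (lam (b + m) b / lam 2 2)) := by
    intro m
    induction m with
    | zero =>
      intro b hb
      simpa using hmom b hb
    | succ m ih =>
      intro b hb
      obtain ⟨a, rfl⟩ : ∃ a, b = a + 2 := ⟨b - 2, by omega⟩
      have hA := ih (a + 2) hb
      have hB := ih (a + 3) (by omega)
      have hfun : ∀ N, (∫ ω, X N ω ^ (a + 2) * (1 - X N ω) ^ (m + 1) ∂μ)
          = (∫ ω, X N ω ^ (a + 2) * (1 - X N ω) ^ m ∂μ)
            - (∫ ω, X N ω ^ (a + 3) * (1 - X N ω) ^ m ∂μ) := by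
        intro N
        rw [← integral_sub (hXint N (a + 2) m) (hXint N (a + 3) m)]
        congr 1
        funext ω
        ring
      have hlamrec : lam (a + 2 + (m + 1)) (a + 2)
          = lam (a + 2 + m) (a + 2) - lam (a + 3 + m) (a + 3) := by
        rw [hlam, hlam, hlam]
        have e1 : a + 2 + (m + 1) - (a + 2) = m + 1 := by omega
        have e2 : a + 2 + m - (a + 2) = m := by omega
        have e3 : a + 3 + m - (a + 3) = m := by omega
        have e4 : a + 2 - 2 = a := by omega
        have e5 : a + 3 - 2 = a + 1 := by omega
        rw [e1, e2, e3, e4, e5, ← integral_sub (hΛint a m) (hΛint (a + 1) m)]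
        congr 1
        funext x
        ring
      have : Tendsto (fun N => (∫ ω, X N ω ^ (a + 2) * (1 - X N ω) ^ m ∂μ) / c N
          - (∫ ω, X N ω ^ (a + 3) * (1 - X N ω) ^ m ∂μ) / c N) atTop
          (nhds (lam (a + 2 + m) (a + 2) / lam 2 2 - lam (a + 3 + m) (a + 3) / lam 2 2)) :=
        hA.sub hB
      rw [hlamrec, sub_div]
      convert this using 2 with N
      rw [hfun, sub_div]
  intro n b hb hbn
  have := key (n - b) b hb
  have hn : b + (n - b) = n := by omega
  rwa [hn] at this
end

section
/- Let N ≥ 1 and let η_1, …, η_N be nonnegative reals with Σ_{i=1}^N η_i = 1. Let j ≥ 1 and let b_1 ≥ b_2 ≥ ⋯ ≥ b_j ≥ 1 be integers. If b_1 ≥ 3, or if j ≥ 2 and b_2 ≥ 2, then Σ over all j-tuples (i_1, …, i_j) of pairwise distinct indices in {1,…,N} of η_{i_1}^{b_1} ⋯ η_{i_j}^{b_j} is at most Σ_{i=1}^N η_i³. -/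
open Finset

set_option maxHeartbeats 1000000 in
/-- If `η_1, …, η_N ≥ 0` sum to 1 and `b_1 ≥ ⋯ ≥ b_j ≥ 1` with `b_1 ≥ 3`, or `j ≥ 2` and
`b_2 ≥ 2`, then the sum over ordered tuples of pairwise distinct indices of
`η_{i_1}^{b_1} ⋯ η_{i_j}^{b_j}` is at most `∑ η_i³`. -/
theorem stmt5 (N : ℕ) (hN : 1 ≤ N) (η : Fin N → ℝ) (hη : ∀ i, 0 ≤ η i)
    (hsum : ∑ i, η i = 1) (j : ℕ) (hj : 0 < j) (b : Fin j → ℕ)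
    (hmono : ∀ k l : Fin j, k ≤ l → b l ≤ b k) (hb : ∀ k, 1 ≤ b k)
    (hcase : 3 ≤ b ⟨0, hj⟩ ∨ ∃ h : 1 < j, 2 ≤ b ⟨1, h⟩) :
    ∑ e : Fin j ↪ Fin N, ∏ k, η (e k) ^ b k ≤ ∑ i, η i ^ 3 := by
  have hη1 : ∀ i, η i ≤ 1 := by
    intro i
    rw [← hsum]
    exact Finset.single_le_sum (fun i _ => hη i) (mem_univ i)
  -- generic bound through an exponent function c
  have key : ∀ c : Fin j → ℕ, (∀ k, c k ≤ b k) →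
      ∑ e : Fin j ↪ Fin N, ∏ k, η (e k) ^ b k ≤ ∏ k, ∑ i, η i ^ c k := by
    intro c hcb
    have step1 : ∑ e : Fin j ↪ Fin N, ∏ k, η (e k) ^ b k ≤
        ∑ e : Fin j ↪ Fin N, ∏ k, η (e k) ^ c k := by
      refine Finset.sum_le_sum fun e _ => Finset.prod_le_prod
        (fun k _ => pow_nonneg (hη _) _)
        (fun k _ => pow_le_pow_of_le_one (hη _) (hη1 _) (hcb k))
    have step2 : ∑ e : Fin j ↪ Fin N, ∏ k, η (e k) ^ c k ≤
        ∑ f : Fin j → Fin N, ∏ k, η (f k) ^ c k := by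
      have himg : ∑ e : Fin j ↪ Fin N, ∏ k, η (e k) ^ c k
          = ∑ f ∈ (univ : Finset (Fin j ↪ Fin N)).image
              (fun e : Fin j ↪ Fin N => (e : Fin j → Fin N)),
              ∏ k, η (f k) ^ c k := by
        rw [Finset.sum_image]
        intro x _ y _ h
        exact Function.Embedding.coe_injective h
      rw [himg]
      exact Finset.sum_le_sum_of_subset_of_nonneg (subset_univ _)
        (fun f _ _ => Finset.prod_nonneg fun k _ => pow_nonneg (hη _) _)
    have step3 : ∑ f : Fin j → Fin N, ∏ k, η (f k) ^ c k = ∏ k, ∑ i, η i ^ c k := by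
      rw [Finset.prod_univ_sum (fun _ => (univ : Finset (Fin N))) (fun k i => η i ^ c k),
        Fintype.piFinset_univ]
    exact step1.trans (step2.trans step3.le)
  obtain h3 | ⟨h1, h2⟩ := hcase
  · -- case b 0 ≥ 3
    have := key (fun k => if k = ⟨0, hj⟩ then 3 else 1) (by
      intro k; by_cases h : k = ⟨0, hj⟩ <;> simp [h, h3, hb k])
    refine this.trans ?_
    rw [Finset.prod_eq_single ⟨0, hj⟩ (fun k _ hk => by simp [hk, hsum]) (by simp)]
    simp
  · -- case j ≥ 2 and b 1 ≥ 2
    have hb0 : 2 ≤ b ⟨0, hj⟩ := le_trans h2 (hmono _ _ (by simp))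
    have := key (fun k => if (k : ℕ) ≤ 1 then 2 else 1) (by
      intro k
      by_cases h : (k : ℕ) ≤ 1
      · simp only [h, if_true]
        interval_cases hk : (k : ℕ)
        · have : k = ⟨0, hj⟩ := Fin.ext hk
          rw [this]; exact hb0
        · have : k = ⟨1, h1⟩ := Fin.ext hk
          rw [this]; exact h2
      · simp [h, hb k])
    refine this.trans ?_
    have hfilter : (univ : Finset (Fin j)).filter (fun k : Fin j => (k : ℕ) ≤ 1) =
        {⟨0, hj⟩, ⟨1, h1⟩} := by
      ext k
      simp [Fin.ext_iff]
      omega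
    have T2 : ∑ i, η i ^ 2 ≤ 1 := by
      rw [← hsum]
      exact Finset.sum_le_sum fun i _ => by
        calc η i ^ 2 ≤ η i ^ 1 := pow_le_pow_of_le_one (hη i) (hη1 i) one_le_two
        _ = η i := pow_one _
    have Tnn : 0 ≤ ∑ i, η i ^ 2 := Finset.sum_nonneg fun i _ => pow_nonneg (hη i) _
    have hprod : ∏ k : Fin j, (∑ i, η i ^ (if (k : ℕ) ≤ 1 then 2 else 1)) =
        (∑ i, η i ^ 2) ^ 2 := by
      have hsplit : ∀ k : Fin j, (∑ i, η i ^ (if (k : ℕ) ≤ 1 then 2 else 1)) =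
          if (k : ℕ) ≤ 1 then (∑ i, η i ^ 2) else 1 := by
        intro k; split <;> simp [hsum]
      rw [Finset.prod_congr rfl (fun k _ => hsplit k), Finset.prod_ite,
        Finset.prod_const, Finset.prod_const, one_pow, mul_one, hfilter]
      rw [Finset.card_insert_of_notMem (by simp [Fin.ext_iff]), Finset.card_singleton]
    rw [hprod]
    -- Cauchy–Schwarz: (∑ η²)² ≤ (∑ η³)(∑ η) = ∑ η³
    have CS := Finset.sum_mul_sq_le_sq_mul_sq univ
      (fun i => Real.sqrt (η i) ^ 3) (fun i => Real.sqrt (η i))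
    have e1 : ∀ i, Real.sqrt (η i) ^ 3 * Real.sqrt (η i) = η i ^ 2 := by
      intro i
      rw [← pow_succ, show (3 + 1 : ℕ) = 2 * 2 from rfl, pow_mul, Real.sq_sqrt (hη i)]
    have e2 : ∀ i, (Real.sqrt (η i) ^ 3) ^ 2 = η i ^ 3 := by
      intro i
      rw [← pow_mul, show (3 * 2 : ℕ) = 2 * 3 from rfl, pow_mul, Real.sq_sqrt (hη i)]
    have e3 : ∀ i, Real.sqrt (η i) ^ 2 = η i := fun i => Real.sq_sqrt (hη i)
    simp only [e1, e2, e3] at CS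
    rw [hsum, mul_one] at CS
    exact CS
end

section
/- For each N ≥ 2 let η^{(N)} = (η^{(N)}_1, …, η^{(N)}_N) be a random vector with nonnegative entries summing to 1, and set c_N = E[ Σ_{i=1}^N (η^{(N)}_i)² ], assumed strictly positive. Assume (a) E[ Σ_{i=2}^N (η^{(N)}_i)³ ] = o(c_N) as N → ∞, and (b) there exists β > 2 such that E[ (η^{(N)}_1)^β ] = o(c_N) as N → ∞. Then E[ Σ_{i=1}^N (η^{(N)}_i)³ ] = o(c_N) as N → ∞. -/
open MeasureTheory Filter

/-- Bounded measurable nonnegative functions on probability spaces are integrable. -/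
lemma stmt6_int_aux {Ω : Type*} [MeasurableSpace Ω] (μ : Measure Ω)
    [IsProbabilityMeasure μ] {f : Ω → ℝ} (hm : Measurable f)
    (h0 : ∀ ω, 0 ≤ f ω) (h1 : ∀ ω, f ω ≤ 1) : Integrable f μ := by
  refine (integrable_const (1 : ℝ)).mono' hm.aestronglyMeasurable
    (Filter.Eventually.of_forall fun ω => ?_)
  rw [Real.norm_eq_abs, abs_of_nonneg (h0 ω)]
  exact h1 ω

/-- Pointwise Young-type interpolation bound: for `x ∈ [0,1]`, `β > 2`, `0 < δ`,
`x^3 ≤ δ x² + C x^β` with `C = max 1 (δ^(3-β))`. -/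
lemma stmt6_pt_aux {β δ x : ℝ} (hβ : 2 < β) (hδ : 0 < δ) (hx0 : 0 ≤ x) (hx1 : x ≤ 1) :
    x ^ 3 ≤ δ * x ^ 2 + max 1 (δ ^ (3 - β)) * x ^ β := by
  set C := max 1 (δ ^ (3 - β)) with hCdef
  have hC1 : (1 : ℝ) ≤ C := le_max_left _ _
  have hxβ : 0 ≤ x ^ β := Real.rpow_nonneg hx0 β
  rcases le_or_gt x δ with h | h
  · have h1 : x ^ 3 ≤ δ * x ^ 2 := by nlinarith [sq_nonneg x]
    nlinarith
  · have hx0' : 0 < x := lt_trans hδ h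
    have hkey : x ^ (3 : ℝ) ≤ C * x ^ β := by
      have hsplit : x ^ (3 : ℝ) = x ^ β * x ^ (3 - β) := by
        rw [← Real.rpow_add hx0']; ring_nf
      rw [hsplit]
      have hle : x ^ (3 - β) ≤ C := by
        rcases le_or_gt 0 (3 - β) with he | he
        · exact le_trans (Real.rpow_le_one hx0 hx1 he) hC1
        · exact le_trans (Real.rpow_le_rpow_of_nonpos hδ h.le he.le) (le_max_right _ _)
      calc x ^ β * x ^ (3 - β) ≤ x ^ β * C := by
            exact mul_le_mul_of_nonneg_left hle hxβ
        _ = C * x ^ β := mul_comm _ _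
    have hnat : x ^ (3 : ℝ) = x ^ (3 : ℕ) := by
      rw [← Real.rpow_natCast x 3]; norm_num
    rw [hnat] at hkey
    nlinarith [sq_nonneg x]

/-- Kingman criterion: for an AWF model with family frequencies `η^{(N)}` (nonnegative,
summing to 1 over `i < N`), pair-coalescence probability `c_N = E[∑ η_i²] > 0`, if
`E[∑_{i=2}^N η_i³] = o(c_N)` and `E[η_1^β] = o(c_N)` for some `β > 2`, then
`E[∑_{i=1}^N η_i³] = o(c_N)`.  (Index `i = 1` of the paper is index `0` here.) -/
theorem stmt6
    (Ω : ℕ → Type) (mΩ : ∀ N, MeasurableSpace (Ω N)) (μ : ∀ N, Measure (Ω N))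
    (hprob : ∀ N, IsProbabilityMeasure (μ N))
    (η : ∀ N, Ω N → ℕ → ℝ)
    (hmeas : ∀ N i, Measurable (fun ω => η N ω i))
    (hnn : ∀ N ω i, 0 ≤ η N ω i)
    (hsum : ∀ N, 2 ≤ N → ∀ ω, ∑ i ∈ Finset.range N, η N ω i = 1)
    (c : ℕ → ℝ)
    (hc : ∀ N, c N = ∫ ω, ∑ i ∈ Finset.range N, (η N ω i) ^ 2 ∂μ N)
    (hcpos : ∀ N, 2 ≤ N → 0 < c N)
    (ha : Tendsto (fun N => (∫ ω, ∑ i ∈ Finset.Ico 1 N, (η N ω i) ^ 3 ∂μ N) / c N)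
      atTop (nhds 0))
    (hb : ∃ β : ℝ, 2 < β ∧
      Tendsto (fun N => (∫ ω, (η N ω 0) ^ β ∂μ N) / c N) atTop (nhds 0)) :
    Tendsto (fun N => (∫ ω, ∑ i ∈ Finset.range N, (η N ω i) ^ 3 ∂μ N) / c N)
      atTop (nhds 0) := by
  obtain ⟨β, hβ, hb⟩ := hb
  have := hprob
  -- basic bounds
  have hle1 : ∀ N, 2 ≤ N → ∀ ω, ∀ i ∈ Finset.range N, η N ω i ≤ 1 := by
    intro N hN ω i hi
    rw [← hsum N hN ω]
    exact Finset.single_le_sum (fun j _ => hnn N ω j) hi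
  -- integrability of the needed functions, for N ≥ 2
  have int_pow : ∀ N, 2 ≤ N → ∀ i ∈ Finset.range N, ∀ k : ℕ, 1 ≤ k →
      Integrable (fun ω => (η N ω i) ^ k) (μ N) := by
    intro N hN i hi k hk
    exact stmt6_int_aux (μ N) ((hmeas N i).pow_const k)
      (fun ω => pow_nonneg (hnn N ω i) k)
      (fun ω => pow_le_one₀ (hnn N ω i) (hle1 N hN ω i hi))
  have int_sum : ∀ N, 2 ≤ N → ∀ (s : Finset ℕ), s ⊆ Finset.range N → ∀ k : ℕ, 1 ≤ k →
      Integrable (fun ω => ∑ i ∈ s, (η N ω i) ^ k) (μ N) := by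
    intro N hN s hs k hk
    exact integrable_finset_sum s (fun i hi => int_pow N hN i (hs hi) k hk)
  have int_rpow : ∀ N, 2 ≤ N → Integrable (fun ω => (η N ω 0) ^ β) (μ N) := by
    intro N hN
    refine stmt6_int_aux (μ N)
      ((Real.continuous_rpow_const (by linarith : (0:ℝ) ≤ β)).measurable.comp (hmeas N 0))
      (fun ω => Real.rpow_nonneg (hnn N ω 0) β)
      (fun ω => Real.rpow_le_one (hnn N ω 0) ?_ (by linarith))
    exact hle1 N hN ω 0 (Finset.mem_range.2 (by omega))
  -- ∫ η₀² ≤ c N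
  have h0mem : ∀ N : ℕ, 2 ≤ N → 0 ∈ Finset.range N := fun N hN =>
    Finset.mem_range.2 (by omega)
  have hη0sq : ∀ N, 2 ≤ N → (∫ ω, (η N ω 0) ^ 2 ∂μ N) ≤ c N := by
    intro N hN
    rw [hc N]
    refine integral_mono (int_pow N hN 0 (h0mem N hN) 2 one_le_two)
      (int_sum N hN _ le_rfl 2 one_le_two) (fun ω => ?_)
    exact Finset.single_le_sum (fun j _ => pow_nonneg (hnn N ω j) 2) (h0mem N hN)
  -- main step: ∫ η₀³ / c N → 0
  have hA : Tendsto (fun N => (∫ ω, (η N ω 0) ^ 3 ∂μ N) / c N) atTop (nhds 0) := by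
    rw [NormedAddCommGroup.tendsto_nhds_zero]
    intro ε hε
    set δ : ℝ := ε / 2 with hδdef
    have hδ : 0 < δ := by positivity
    set C : ℝ := max 1 (δ ^ (3 - β)) with hCdef
    have hC : 0 < C := lt_of_lt_of_le one_pos (le_max_left _ _)
    have hev := hb.eventually (eventually_lt_nhds (div_pos hδ hC))
    filter_upwards [hev, eventually_ge_atTop 2] with N hN2 hN
    have hcN := hcpos N hN
    have hI0 : 0 ≤ ∫ ω, (η N ω 0) ^ β ∂μ N :=
      integral_nonneg fun ω => Real.rpow_nonneg (hnn N ω 0) β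
    have hA0 : 0 ≤ ∫ ω, (η N ω 0) ^ 3 ∂μ N :=
      integral_nonneg fun ω => pow_nonneg (hnn N ω 0) 3
    have hbound : (∫ ω, (η N ω 0) ^ 3 ∂μ N)
        ≤ δ * c N + C * ∫ ω, (η N ω 0) ^ β ∂μ N := by
      have step1 : (∫ ω, (η N ω 0) ^ 3 ∂μ N)
          ≤ ∫ ω, (δ * (η N ω 0) ^ 2 + C * (η N ω 0) ^ β) ∂μ N := by
        refine integral_mono (int_pow N hN 0 (h0mem N hN) 3 (by norm_num))
          (((int_pow N hN 0 (h0mem N hN) 2 one_le_two).const_mul δ).add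
            ((int_rpow N hN).const_mul C)) (fun ω => ?_)
        exact stmt6_pt_aux hβ hδ (hnn N ω 0) (hle1 N hN ω 0 (h0mem N hN))
      have step2 : (∫ ω, (δ * (η N ω 0) ^ 2 + C * (η N ω 0) ^ β) ∂μ N)
          = δ * (∫ ω, (η N ω 0) ^ 2 ∂μ N) + C * ∫ ω, (η N ω 0) ^ β ∂μ N := by
        rw [integral_add ((int_pow N hN 0 (h0mem N hN) 2 one_le_two).const_mul δ)
          ((int_rpow N hN).const_mul C), integral_const_mul, integral_const_mul]
      calc (∫ ω, (η N ω 0) ^ 3 ∂μ N)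
          ≤ δ * (∫ ω, (η N ω 0) ^ 2 ∂μ N) + C * ∫ ω, (η N ω 0) ^ β ∂μ N := by
            rw [← step2]; exact step1
        _ ≤ δ * c N + C * ∫ ω, (η N ω 0) ^ β ∂μ N := by
            have := hη0sq N hN
            nlinarith
    rw [Real.norm_eq_abs, abs_of_nonneg (div_nonneg hA0 hcN.le)]
    have hdiv : (∫ ω, (η N ω 0) ^ 3 ∂μ N) / c N
        ≤ δ + C * ((∫ ω, (η N ω 0) ^ β ∂μ N) / c N) := by
      rw [div_le_iff₀ hcN]
      calc (∫ ω, (η N ω 0) ^ 3 ∂μ N) ≤ δ * c N + C * ∫ ω, (η N ω 0) ^ β ∂μ N := hbound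
        _ = (δ + C * ((∫ ω, (η N ω 0) ^ β ∂μ N) / c N)) * c N := by
            field_simp
    have h2 : C * ((∫ ω, (η N ω 0) ^ β ∂μ N) / c N) < δ := by
      have := mul_lt_mul_of_pos_left hN2 hC
      calc C * ((∫ ω, (η N ω 0) ^ β ∂μ N) / c N) < C * (δ / C) := this
        _ = δ := by field_simp
    calc (∫ ω, (η N ω 0) ^ 3 ∂μ N) / c N ≤ δ + C * ((∫ ω, (η N ω 0) ^ β ∂μ N) / c N) :=
          hdiv
      _ < δ + δ := by linarith
      _ = ε := by rw [hδdef]; ring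
  -- split the sum and conclude
  have hsplit : ∀ᶠ N in atTop,
      (∫ ω, (η N ω 0) ^ 3 ∂μ N) / c N
        + (∫ ω, ∑ i ∈ Finset.Ico 1 N, (η N ω i) ^ 3 ∂μ N) / c N
      = (∫ ω, ∑ i ∈ Finset.range N, (η N ω i) ^ 3 ∂μ N) / c N := by
    filter_upwards [eventually_ge_atTop 2] with N hN
    rw [← add_div]
    congr 1
    rw [← integral_add (int_pow N hN 0 (h0mem N hN) 3 (by norm_num))
      (int_sum N hN (Finset.Ico 1 N) (by
        intro i hi
        simp only [Finset.mem_Ico] at hi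
        exact Finset.mem_range.2 hi.2) 3 (by norm_num))]
    refine integral_congr_ae (Filter.Eventually.of_forall fun ω => ?_)
    rw [Finset.range_eq_Ico]
    exact (Finset.sum_eq_sum_Ico_succ_bot (show 0 < N by omega) fun i => (η N ω i) ^ 3).symm
  have := hA.add ha
  rw [add_zero] at this
  exact Tendsto.congr' hsplit this
end
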